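/- Let D be a semiregular (m,n,k,λ₁,λ₂)-divisible difference set in a finite abelian group G relative to N, with {η_j}_{j=1}^m enumerating N^⊥ and {χ_i}_{i=1}^n coset representatives of Ĝ/N^⊥. Define e^i_j = (1/√k)((χ_i η_j)(g))_{g∈D} ∈ ℂ^k. Then for each fixed i, {e^i_j}_{j=1}^m is an orthonormal set, and setting W_i = span{e^i_j}_{j=1}^m, the collection {W_i}_{i=1}^n is an equichordal tight fusion frame for ℂ^k with fusion frame bound nm/k. -/

import Mathlib

/-!
For a character `ψ` of `G` write `S ψ = ∑ g ∈ D, ψ g`. Counting differences of `D` gives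
`|S ψ|² = (k - λ₁) + (λ₁ - λ₂) |N| [ψ ∈ N^⊥] + λ₂ |G| [ψ = 1]`, and at `ψ = 1` semiregularity
`k² = λ₂ |G|` forces `(k - λ₁) + (λ₁ - λ₂) |N| = 0`. So `S` vanishes on the nontrivial characters
of `N^⊥`, and `|S|² = k - λ₁` off `N^⊥`. The entries of `E iᴴ * E i'` are
`S (χ i' η j' / χ i η j) / k`: within one block the quotient lies in `N^⊥`, which gives
orthonormality; for `i ≠ i'` it lies outside `N^⊥`, so `tr (P i P i') = ‖E iᴴ E i'‖²` is
`m² (k - λ₁) / k²`. Tightness is the orthogonality of the characters of `G`, which the products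
`χ i * η j` enumerate exactly once.
-/

open Finset Matrix ComplexConjugate

namespace AddChar

variable {A R : Type*} [AddGroup A] [Fintype A] [CommSemiring R] [IsDomain R]

open Classical in
lemma sum_ite_mem_addSubgroup (ψ : AddChar A R) (N : AddSubgroup A) :
    ∑ x, (if x ∈ N then ψ x else 0) = if ∀ h ∈ N, ψ h = 1 then (Nat.card N : R) else 0 := by
  rw [← sum_filter, sum_subtype (p := (· ∈ N)) _ (fun x => by simp)]
  change ∑ a, ψ.compAddMonoidHom N.subtype a = _
  rw [sum_eq_ite, Nat.card_eq_fintype_card]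
  simp only [DFunLike.ext_iff, Subtype.forall, compAddMonoidHom_apply, zero_apply]
  rfl

end AddChar

section DifferenceSet

variable {G : Type*} [AddCommGroup G] [DecidableEq G]

def diffCount (D : Finset G) (x : G) : ℕ := #{p ∈ D ×ˢ D | p.1 - p.2 = x}

lemma diffCount_zero (D : Finset G) : diffCount D 0 = #D := by
  rw [diffCount, ← diag_card D, diag_eq_filter]
  simp only [sub_eq_zero]

lemma diffCount_of_ne_zero (D : Finset G) {x : G} (hx : x ≠ 0) :
    diffCount D x = #{p ∈ D ×ˢ D | p.1 ≠ p.2 ∧ p.1 - p.2 = x} :=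
  congrArg card <| filter_congr fun _ _ =>
    ⟨fun h => ⟨fun he => hx (h ▸ sub_eq_zero.2 he), h⟩, And.right⟩

def IsDivisibleDiffSet (N : AddSubgroup G) (D : Finset G) (l1 l2 : ℕ) : Prop :=
  (∀ g ∈ N, g ≠ 0 → #{p ∈ D ×ˢ D | p.1 ≠ p.2 ∧ p.1 - p.2 = g} = l1) ∧
    ∀ g ∉ N, #{p ∈ D ×ˢ D | p.1 ≠ p.2 ∧ p.1 - p.2 = g} = l2

variable {N : AddSubgroup G} {D : Finset G} {l1 l2 : ℕ}

open Classical in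
lemma IsDivisibleDiffSet.diffCount_eq (hD : IsDivisibleDiffSet N D l1 l2) (x : G) :
    (diffCount D x : ℂ) =
      l2 + (l1 - l2) * (if x ∈ N then 1 else 0) + (#D - l1) * (if x = 0 then 1 else 0) := by
  by_cases h0 : x = 0
  · subst h0
    simp [diffCount_zero, N.zero_mem]
  by_cases hN : x ∈ N
  · simp [diffCount_of_ne_zero D h0, hD.1 x hN h0, hN, h0]
  · simp [diffCount_of_ne_zero D h0, hD.2 x hN, hN, h0]

variable [Fintype G]

lemma sum_mul_conj_sum_eq_sum_diffCount (ψ : AddChar G ℂ) :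
    (∑ g ∈ D, ψ g) * conj (∑ g ∈ D, ψ g) = ∑ x, (diffCount D x : ℂ) * ψ x := by
  simp only [map_sum, ← AddChar.map_neg_eq_conj, sum_mul_sum, ← AddChar.map_add_eq_mul,
    ← sub_eq_add_neg, ← sum_product' (f := fun a b => ψ (a - b))]
  rw [← sum_fiberwise (D ×ˢ D) (fun p => p.1 - p.2)]
  refine sum_congr rfl fun x _ => ?_
  rw [sum_congr rfl fun p hp => congrArg ψ (mem_filter.1 hp).2, sum_const, nsmul_eq_mul, diffCount]

open Classical in
lemma IsDivisibleDiffSet.sum_mul_conj_sum (hD : IsDivisibleDiffSet N D l1 l2)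
    (ψ : AddChar G ℂ) :
    (∑ g ∈ D, ψ g) * conj (∑ g ∈ D, ψ g) =
      (#D - l1 : ℂ) + (l1 - l2) * (if ∀ h ∈ N, ψ h = 1 then (Nat.card N : ℂ) else 0) +
        l2 * (if ψ = 1 then (Fintype.card G : ℂ) else 0) := by
  simp only [sum_mul_conj_sum_eq_sum_diffCount, hD.diffCount_eq, add_mul, mul_assoc, ite_mul,
    one_mul, zero_mul, sum_add_distrib, ← mul_sum, sum_ite_eq', mem_univ, if_true,
    AddChar.map_zero_eq_one, AddChar.sum_ite_mem_addSubgroup, AddChar.sum_eq_ite,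
    ← AddChar.one_eq_zero]
  ring

lemma IsDivisibleDiffSet.sub_add_mul_card_eq_zero (hD : IsDivisibleDiffSet N D l1 l2)
    (hsr : #D ^ 2 = l2 * Fintype.card G) : (#D - l1 : ℂ) + (l1 - l2) * Nat.card N = 0 := by
  have h := hD.sum_mul_conj_sum 1
  simp only [AddChar.one_apply, sum_const, nsmul_eq_mul, mul_one, map_natCast,
    if_true, implies_true] at h
  have hsrC : (#D : ℂ) ^ 2 = l2 * Fintype.card G := by exact_mod_cast hsr
  linear_combination hsrC - h

lemma IsDivisibleDiffSet.sum_eq_zero (hD : IsDivisibleDiffSet N D l1 l2)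
    (hsr : #D ^ 2 = l2 * Fintype.card G) {ψ : AddChar G ℂ} (hN : ∀ h ∈ N, ψ h = 1)
    (hψ : ψ ≠ 1) : ∑ g ∈ D, ψ g = 0 := by
  have h := hD.sum_mul_conj_sum ψ
  rw [if_pos hN, if_neg hψ, mul_zero, add_zero, hD.sub_add_mul_card_eq_zero hsr] at h
  exact (mul_eq_zero.1 h).elim id (map_eq_zero _).1

lemma IsDivisibleDiffSet.sum_mul_conj_sum_of_exists_ne_one (hD : IsDivisibleDiffSet N D l1 l2)
    {ψ : AddChar G ℂ} (hN : ∃ h ∈ N, ψ h ≠ 1) :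
    (∑ g ∈ D, ψ g) * conj (∑ g ∈ D, ψ g) = #D - l1 := by
  obtain ⟨h, hmem, hne⟩ := hN
  have hψ : ψ ≠ 1 := fun h1 => hne (h1 ▸ AddChar.one_apply h)
  rw [hD.sum_mul_conj_sum, if_neg fun h' => hne (h' h hmem), if_neg hψ]
  ring

end DifferenceSet

section Transversal

variable {G ι ι' : Type*} [AddCommGroup G] {N : AddSubgroup G}
  {η : ι' ≃ {ψ : AddChar G ℂ // ∀ h ∈ N, ψ h = 1}} {χ : ι → AddChar G ℂ}

lemma bijective_mul_of_existsUnique (hχ : ∀ ψ : AddChar G ℂ, ∃! i, ∃ j, ψ = χ i * (η j).1) :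
    Function.Bijective fun p : ι × ι' => χ p.1 * (η p.2).1 := by
  refine ⟨fun ⟨i, j⟩ ⟨i', j'⟩ h => ?_, fun ψ => ?_⟩
  · obtain rfl : i = i' := (hχ _).unique ⟨j, rfl⟩ ⟨j', h⟩
    exact Prod.ext rfl (η.injective (Subtype.ext (mul_left_cancel h)))
  · obtain ⟨i, ⟨j, hj⟩, -⟩ := hχ ψ
    exact ⟨(i, j), hj.symm⟩

lemma exists_apply_ne_one_of_ne (hχ : ∀ ψ : AddChar G ℂ, ∃! i, ∃ j, ψ = χ i * (η j).1)
    {i i' : ι} (hi : i ≠ i') (j j' : ι') :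
    ∃ h ∈ N, (χ i' * (η j').1 * (χ i * (η j).1)⁻¹) h ≠ 1 := by
  by_contra! hN
  set ψ := χ i' * (η j').1 * (χ i * (η j).1)⁻¹ with hψ
  have hmem : ∀ h ∈ N, ((η j).1 * ψ) h = 1 := fun h hh => by
    rw [AddChar.mul_apply, (η j).2 h hh, hN h hh, one_mul]
  have hprod : χ i' * (η j').1 = χ i * (η (η.symm ⟨_, hmem⟩)).1 := by
    rw [Equiv.apply_symm_apply, ← mul_assoc, hψ, mul_comm (χ i * (η j).1), inv_mul_cancel_right]
  exact hi ((hχ _).unique ⟨_, hprod⟩ ⟨j', rfl⟩)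

end Transversal

section MatrixAlgebra

variable {R κ ι ι' : Type*} [CommRing R] [StarRing R] [Fintype κ]

lemma conjTranspose_smul_mul_smul (c : R) (A : Matrix κ ι R) (B : Matrix κ ι' R) :
    (c • A)ᴴ * (c • B) = (star c * c) • (Aᴴ * B) := by
  rw [conjTranspose_smul, Matrix.smul_mul, Matrix.mul_smul, smul_smul]

omit [Fintype κ] in
lemma smul_mul_conjTranspose_smul [Fintype ι] (c : R) (A : Matrix κ ι R) (B : Matrix ι' ι R) :
    (c • A) * (c • B)ᴴ = (c * star c) • (A * Bᴴ) := by
  rw [conjTranspose_smul, Matrix.smul_mul, Matrix.mul_smul, smul_smul]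

lemma trace_mul_conjTranspose_mul_mul_conjTranspose [Fintype ι] [Fintype ι']
    (A : Matrix κ ι R) (B : Matrix κ ι' R) :
    trace (A * Aᴴ * (B * Bᴴ)) = ∑ j, ∑ j', (Aᴴ * B) j j' * star ((Aᴴ * B) j j') := by
  have h : trace (A * Aᴴ * (B * Bᴴ)) = trace ((Aᴴ * B) * (Aᴴ * B)ᴴ) := by
    rw [conjTranspose_mul, conjTranspose_conjTranspose, Matrix.mul_assoc, trace_mul_comm]
    simp only [Matrix.mul_assoc]
  rw [h]
  simp only [trace, diag_apply, mul_apply, conjTranspose_apply]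

end MatrixAlgebra

section CharacterMatrix

variable {G κ ι ι' : Type*} [AddCommGroup G]

def charMatrix (v : κ → G) (φ : ι → AddChar G ℂ) : Matrix κ ι ℂ := of fun t j => φ j (v t)

lemma conjTranspose_charMatrix_mul_apply [Finite G] [Fintype κ] (v : κ → G)
    (φ : ι → AddChar G ℂ) (φ' : ι' → AddChar G ℂ) (j : ι) (j' : ι') :
    ((charMatrix v φ)ᴴ * charMatrix v φ') j j' = ∑ t, (φ' j' * (φ j)⁻¹) (v t) := by
  simp only [charMatrix, mul_apply, conjTranspose_apply, of_apply, AddChar.mul_apply,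
    AddChar.inv_apply, Complex.star_def, ← AddChar.map_neg_eq_conj, mul_comm]

lemma charMatrix_mul_conjTranspose_apply [Finite G] [Fintype ι] (v : κ → G)
    (φ : ι → AddChar G ℂ) (t t' : κ) :
    (charMatrix v φ * (charMatrix v φ)ᴴ) t t' = ∑ j, φ j (v t - v t') := by
  simp only [charMatrix, mul_apply, conjTranspose_apply, of_apply, sub_eq_add_neg,
    AddChar.map_add_eq_mul, Complex.star_def, ← AddChar.map_neg_eq_conj]

lemma sum_charMatrix_mul_conjTranspose [Fintype G] [DecidableEq G] [Fintype ι] [Fintype ι']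
    [DecidableEq κ] {v : κ → G} (hv : Function.Injective v) {φ : ι → ι' → AddChar G ℂ}
    (hφ : Function.Bijective fun p : ι × ι' => φ p.1 p.2) :
    ∑ i, charMatrix v (φ i) * (charMatrix v (φ i))ᴴ = (Fintype.card G : ℂ) • 1 := by
  ext t t'
  rw [Matrix.sum_apply]
  simp only [charMatrix_mul_conjTranspose_apply]
  rw [← Fintype.sum_prod_type', Fintype.sum_bijective _ hφ _ (fun ψ => ψ (v t - v t'))
    fun _ => rfl, AddChar.sum_apply_eq_ite, Matrix.smul_apply, one_apply]
  simp only [sub_eq_zero, hv.eq_iff, smul_eq_mul, mul_ite, mul_one, mul_zero]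

end CharacterMatrix

lemma Finset.sum_equiv_coe {α κ M : Type*} [Fintype κ] [AddCommMonoid M] {s : Finset α}
    (d : κ ≃ s) (f : α → M) : ∑ t, f (d t) = ∑ x ∈ s, f x :=
  (d.sum_comp fun x => f x).trans (sum_coe_sort s f)

section DifferenceSetMatrix

variable {G κ ι ι' : Type*} [AddCommGroup G] [Fintype G] [DecidableEq G] [Fintype κ]
  {N : AddSubgroup G} {D : Finset G} {l1 l2 : ℕ}

lemma IsDivisibleDiffSet.conjTranspose_charMatrix_mul_self [DecidableEq ι]
    (hD : IsDivisibleDiffSet N D l1 l2) (hsr : #D ^ 2 = l2 * Fintype.card G) (d : κ ≃ D)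
    (χ₀ : AddChar G ℂ) {η : ι → AddChar G ℂ} (hη : Function.Injective η)
    (hηN : ∀ j, ∀ h ∈ N, η j h = 1) :
    (charMatrix (fun t => (d t : G)) fun j => χ₀ * η j)ᴴ *
      charMatrix (fun t => (d t : G)) (fun j => χ₀ * η j) = (#D : ℂ) • 1 := by
  ext j j'
  rw [conjTranspose_charMatrix_mul_apply, sum_equiv_coe d ⇑(χ₀ * η j' * (χ₀ * η j)⁻¹),
    mul_inv, mul_mul_mul_comm, mul_inv_cancel, one_mul, Matrix.smul_apply, one_apply]
  split_ifs with hjj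
  · simp [hjj]
  · rw [smul_zero]
    refine hD.sum_eq_zero hsr (fun h hh => ?_) fun h1 => hjj (hη (mul_inv_eq_one.1 h1)).symm
    rw [AddChar.mul_apply, AddChar.inv_apply', hηN j h hh, hηN j' h hh, inv_one, mul_one]

lemma IsDivisibleDiffSet.conjTranspose_charMatrix_mul_apply_mul_star
    (hD : IsDivisibleDiffSet N D l1 l2) (d : κ ≃ D) (φ : ι → AddChar G ℂ)
    (φ' : ι' → AddChar G ℂ) {j : ι} {j' : ι'}
    (h : ∃ x ∈ N, (φ' j' * (φ j)⁻¹) x ≠ 1) :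
    ((charMatrix (fun t => (d t : G)) φ)ᴴ * charMatrix (fun t => (d t : G)) φ') j j' *
      star (((charMatrix (fun t => (d t : G)) φ)ᴴ * charMatrix (fun t => (d t : G)) φ') j j') =
        #D - l1 := by
  rw [conjTranspose_charMatrix_mul_apply, sum_equiv_coe d ⇑(φ' j' * (φ j)⁻¹)]
  exact hD.sum_mul_conj_sum_of_exists_ne_one h

end DifferenceSetMatrix

open Matrix in
theorem semiregular_dds_equichordal_tff_general {G : Type*} [AddCommGroup G] [Fintype G]
    [DecidableEq G] (m n k l1 l2 : ℕ) (hk : 0 < k)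
    (N : AddSubgroup G) (hG : Fintype.card G = m * n)
    (D : Finset G) (hD : D.card = k)
    (hdd2 : ∀ g : G, g ∉ N →
        ((D ×ˢ D).filter (fun p => p.1 ≠ p.2 ∧ p.1 - p.2 = g)).card = l2)
    (hdd1 : ∀ g : G, g ∈ N → g ≠ 0 →
        ((D ×ˢ D).filter (fun p => p.1 ≠ p.2 ∧ p.1 - p.2 = g)).card = l1)
    (hsr2 : k ^ 2 = l2 * (m * n))
    (η : Fin m ≃ {χ : AddChar G ℂ // ∀ h ∈ N, χ h = 1})
    (χ : Fin n → AddChar G ℂ)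
    (hχ : ∀ ψ : AddChar G ℂ, ∃! i : Fin n, ∃ j : Fin m, ψ = χ i * (η j).1)
    (d : Fin k ≃ {x // x ∈ D})
    (E : Fin n → Matrix (Fin k) (Fin m) ℂ)
    (hE : ∀ i t j, E i t j = ((Real.sqrt k : ℂ))⁻¹ * (χ i * (η j).1) ((d t : G))) :
    (∀ i, (E i)ᴴ * E i = 1) ∧
    (∑ i, E i * (E i)ᴴ) = (((n * m : ℕ) : ℂ) / (k : ℂ)) • 1 ∧
    (∃ c : ℝ, ∀ i i', i ≠ i' →
      ((E i * (E i)ᴴ) * (E i' * (E i')ᴴ)).trace = (c : ℂ)) := by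
  set c : ℂ := ((Real.sqrt k : ℂ))⁻¹
  have hEC : ∀ i, E i = c • charMatrix (fun t => (d t : G)) fun j => χ i * (η j).1 :=
    fun i => Matrix.ext fun t j => hE i t j
  have hc : c * star c = (k : ℂ)⁻¹ := by
    rw [Complex.star_def, map_inv₀, Complex.conj_ofReal, ← mul_inv, ← Complex.ofReal_mul,
      Real.mul_self_sqrt k.cast_nonneg, Complex.ofReal_natCast]
  have hDD : IsDivisibleDiffSet N D l1 l2 := ⟨hdd1, hdd2⟩
  have hsr : #D ^ 2 = l2 * Fintype.card G := by rw [hD, hG, hsr2]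
  refine ⟨fun i => ?_, ?_, ⟨m ^ 2 * (k - l1) / k ^ 2, fun i i' hi => ?_⟩⟩
  · rw [hEC, conjTranspose_smul_mul_smul, mul_comm, hc,
      hDD.conjTranspose_charMatrix_mul_self hsr d (χ i) (η := fun j => (η j).1)
        (fun _ _ h => η.injective (Subtype.ext h)) fun j => (η j).2,
      hD, smul_smul, inv_mul_cancel₀ (by exact_mod_cast hk.ne'), one_smul]
  · simp_rw [hEC, smul_mul_conjTranspose_smul, hc, ← smul_sum]
    rw [sum_charMatrix_mul_conjTranspose (v := fun t => (d t : G))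
      (fun _ _ h => d.injective (Subtype.ext h)) (φ := fun i j => χ i * (η j).1)
      (bijective_mul_of_existsUnique hχ), smul_smul, hG]
    congr 1
    push_cast
    ring
  · have hentry := fun j j' => hDD.conjTranspose_charMatrix_mul_apply_mul_star d
      (fun j => χ i * (η j).1) (fun j => χ i' * (η j).1) (exists_apply_ne_one_of_ne hχ hi j j')
    rw [hEC, hEC, smul_mul_conjTranspose_smul, smul_mul_conjTranspose_smul, hc, Matrix.smul_mul,
      Matrix.mul_smul, smul_smul, trace_smul, trace_mul_conjTranspose_mul_mul_conjTranspose]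
    simp only [hentry, sum_const, card_univ, Fintype.card_fin, nsmul_eq_mul, smul_eq_mul, hD]
    push_cast
    ring

open Matrix in
/-- Construction of an equichordal tight fusion frame from a semiregular
`(m,n,k,λ₁,λ₂)`-divisible difference set: each block of `m` columns built from a
coset of the annihilator is orthonormal, the collection is a tight fusion frame
with bound `nm/k`, and it is equichordal. -/
theorem semiregular_dds_equichordal_tff {G : Type*} [AddCommGroup G] [Fintype G]
    [DecidableEq G] (m n k l1 l2 : ℕ) (hm : 0 < m) (hn : 0 < n) (hk : 0 < k)
    (N : AddSubgroup G) (hG : Fintype.card G = m * n) (hNcard : Nat.card N = n)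
    (D : Finset G) (hD : D.card = k)
    (hdd2 : ∀ g : G, g ∉ N →
        ((D ×ˢ D).filter (fun p => p.1 ≠ p.2 ∧ p.1 - p.2 = g)).card = l2)
    (hdd1 : ∀ g : G, g ∈ N → g ≠ 0 →
        ((D ×ˢ D).filter (fun p => p.1 ≠ p.2 ∧ p.1 - p.2 = g)).card = l1)
    (hsr1 : l1 < k) (hsr2 : k ^ 2 = l2 * (m * n))
    (η : Fin m ≃ {χ : AddChar G ℂ // ∀ h ∈ N, χ h = 1})
    (χ : Fin n → AddChar G ℂ)
    (hχ : ∀ ψ : AddChar G ℂ, ∃! i : Fin n, ∃ j : Fin m, ψ = χ i * (η j).1)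
    (d : Fin k ≃ {x // x ∈ D})
    (E : Fin n → Matrix (Fin k) (Fin m) ℂ)
    (hE : ∀ i t j, E i t j = ((Real.sqrt k : ℂ))⁻¹ * (χ i * (η j).1) ((d t : G))) :
    (∀ i, (E i)ᴴ * E i = 1) ∧
    (∑ i, E i * (E i)ᴴ) = (((n * m : ℕ) : ℂ) / (k : ℂ)) • 1 ∧
    (∃ c : ℝ, ∀ i i', i ≠ i' →
      ((E i * (E i)ᴴ) * (E i' * (E i')ᴴ)).trace = (c : ℂ)) :=
  semiregular_dds_equichordal_tff_general m n k l1 l2 hk N hG D hD hdd2 hdd1 hsr2 η χ hχ d E hE
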